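/- Let tri : ℝ → ℝ be the 2π-periodic triangular wave tri(x) = 1 − (2/π)·arccos(cos x), let g(θ) = tri(3θ), and let n ≥ 1. Put θ_k = 2πk/n and ζ_k = exp(θ_k·I) ∈ ℂ for k ∈ Fin n, and for i ≠ j define ρ_{ij} = (g(θ_i)·ζ_i − g(θ_j)·ζ_j) / (ζ_i − ζ_j). Then |ρ_{ij}| ≤ 4 for all i ≠ j. -/

import Mathlib

/-!
With `a = g θ_i`, `b = g θ_j`, write `ρ_{ij} = (a + b)/2 + (a − b)/2 · (ζ_i + ζ_j)/(ζ_i − ζ_j)`.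
The first term has modulus at most 1 and `|ζ_i + ζ_j| ≤ 2`, so it suffices that
`|g s − g t| ≤ 3 |e^{is} − e^{it}|`. Now `arccos (cos x)` is the distance from `x` to `2πℤ`,
i.e. the norm of `x` in `ℝ/2πℤ`, so `tri` is `2/π`-Lipschitz for that distance, and by Jordan's
inequality the chord `|e^{ix} − 1| = 2 |sin (x/2)|` is at least `2/π` times it.
-/

/-- The 2π-periodic triangular wave `tri x = 1 − (2/π)·arccos (cos x)`. -/
noncomputable def tri (x : ℝ) : ℝ := 1 - 2 / Real.pi * Real.arccos (Real.cos x)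

/-- `g θ = tri (3θ)`. -/
noncomputable def g (θ : ℝ) : ℝ := tri (3 * θ)

/-- The angle `θ_k = 2πk/n`. -/
noncomputable def theta (n : ℕ) (k : Fin n) : ℝ := 2 * Real.pi * ((k : ℕ) : ℝ) / n

/-- The root of unity `ζ_k = exp(θ_k · I)`. -/
noncomputable def zeta (n : ℕ) (k : Fin n) : ℂ :=
  Complex.exp (((theta n k : ℝ) : ℂ) * Complex.I)

/-- `ρ_{ij} = (g(θ_i)·ζ_i − g(θ_j)·ζ_j)/(ζ_i − ζ_j)`. -/
noncomputable def rho (n : ℕ) (i j : Fin n) : ℂ :=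
  (((g (theta n i) : ℝ) : ℂ) * zeta n i - ((g (theta n j) : ℝ) : ℂ) * zeta n j) /
    (zeta n i - zeta n j)

open Real

lemma Real.Angle.norm_eq_abs_toReal (θ : Angle) : ‖θ‖ = |θ.toReal| := by
  have hθ : |θ.toReal| ≤ |2 * π| / 2 := by
    rw [abs_of_pos two_pi_pos]
    linarith [θ.abs_toReal_le_pi]
  conv_lhs => rw [← θ.coe_toReal]
  exact (AddCircle.norm_coe_eq_abs_iff _ two_pi_pos.ne').2 hθ

lemma arccos_cos_eq_norm_coe (x : ℝ) : arccos (cos x) = ‖(x : Angle)‖ := by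
  rw [Angle.norm_eq_abs_toReal, ← arccos_cos (abs_nonneg _) (Angle.abs_toReal_le_pi _), cos_abs,
    Angle.cos_toReal, Angle.cos_coe]

lemma tri_eq (x : ℝ) : tri x = 1 - 2 / π * ‖(x : Angle)‖ := by
  rw [tri, arccos_cos_eq_norm_coe]

lemma abs_tri_le_one (x : ℝ) : |tri x| ≤ 1 := by
  have h₀ := arccos_nonneg (cos x)
  have h₁ : 2 / π * arccos (cos x) ≤ 2 := by
    calc 2 / π * arccos (cos x) ≤ 2 / π * π := by gcongr; exact arccos_le_pi _
      _ = 2 := div_mul_cancel₀ _ pi_ne_zero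
  rw [tri, abs_le]
  constructor <;> nlinarith [pi_pos, div_pos two_pos pi_pos]

lemma two_div_pi_mul_norm_coe_le_norm_exp_sub_one (x : ℝ) :
    2 / π * ‖(x : Angle)‖ ≤ ‖Complex.exp (x * Complex.I) - 1‖ := by
  set d := (x : Angle).toReal
  have hd : |d| ≤ π := Angle.abs_toReal_le_pi _
  have hexp : Complex.exp (x * Complex.I) = Complex.exp (Complex.I * d) := by
    rw [Complex.exp_ofReal_mul_I, mul_comm Complex.I, Complex.exp_ofReal_mul_I, Angle.cos_toReal,
      Angle.sin_toReal, Angle.cos_coe, Angle.sin_coe]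
  rw [hexp, Complex.norm_exp_I_mul_ofReal_sub_one, norm_mul, Real.norm_two, Real.norm_eq_abs,
    abs_sin_eq_sin_abs_of_abs_le_pi (by rw [abs_div, abs_two]; linarith [abs_nonneg d, pi_pos]),
    Angle.norm_eq_abs_toReal, abs_div, abs_two]
  have := mul_le_sin (x := |d| / 2) (by positivity) (by linarith)
  linarith

lemma norm_exp_mul_I_sub_exp_mul_I (s t : ℝ) :
    ‖Complex.exp (s * Complex.I) - Complex.exp (t * Complex.I)‖ =
      ‖Complex.exp ((s - t : ℝ) * Complex.I) - 1‖ := by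
  have h : Complex.exp (s * Complex.I) - Complex.exp (t * Complex.I) =
      Complex.exp (t * Complex.I) * (Complex.exp ((s - t : ℝ) * Complex.I) - 1) := by
    rw [mul_sub, mul_one, ← Complex.exp_add]
    push_cast
    ring_nf
  rw [h, norm_mul, Complex.norm_exp_ofReal_mul_I, one_mul]

lemma abs_tri_nat_mul_sub_le (m : ℕ) (s t : ℝ) :
    |tri (m * s) - tri (m * t)| ≤
      m * ‖Complex.exp (s * Complex.I) - Complex.exp (t * Complex.I)‖ := by
  have hπ : 0 < 2 / π := div_pos two_pos pi_pos
  calc |tri (m * s) - tri (m * t)|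
      = 2 / π * |‖((m * s : ℝ) : Angle)‖ - ‖((m * t : ℝ) : Angle)‖| := by
        rw [tri_eq, tri_eq, ← abs_of_pos hπ, ← abs_mul, abs_of_pos hπ, abs_sub_comm]
        ring_nf
    _ ≤ 2 / π * ‖((m * s : ℝ) : Angle) - ((m * t : ℝ) : Angle)‖ := by
        gcongr
        exact abs_norm_sub_norm_le _ _
    _ = 2 / π * ‖m • ((s - t : ℝ) : Angle)‖ := by
        rw [← Angle.coe_sub, ← Angle.coe_nsmul, nsmul_eq_mul, mul_sub]
    _ ≤ m * (2 / π * ‖((s - t : ℝ) : Angle)‖) := by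
        rw [mul_left_comm]
        gcongr
        exact norm_nsmul_le
    _ ≤ m * ‖Complex.exp (s * Complex.I) - Complex.exp (t * Complex.I)‖ := by
        rw [norm_exp_mul_I_sub_exp_mul_I]
        gcongr
        exact two_div_pi_mul_norm_coe_le_norm_exp_sub_one _

lemma norm_mul_sub_mul_div_sub_le {a b u v : ℂ} {M L : ℝ} (huv : u ≠ v) (ha : ‖a‖ ≤ M)
    (hb : ‖b‖ ≤ M) (hu : ‖u‖ ≤ 1) (hv : ‖v‖ ≤ 1) (hab : ‖a - b‖ ≤ L * ‖u - v‖) :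
    ‖(a * u - b * v) / (u - v)‖ ≤ M + L := by
  have hd : 0 < ‖u - v‖ := norm_pos_iff.2 (sub_ne_zero.2 huv)
  have hsplit : (a * u - b * v) / (u - v) = (a + b) / 2 + (a - b) / 2 * ((u + v) / (u - v)) := by
    field_simp [sub_ne_zero.2 huv]
    ring
  have hmean : ‖(a + b) / 2‖ ≤ M := by
    rw [norm_div, Complex.norm_two]
    linarith [norm_add_le a b]
  have hdiff : ‖(a - b) / 2 * ((u + v) / (u - v))‖ ≤ L := by
    have huv' : ‖u + v‖ ≤ 2 := by linarith [norm_add_le u v]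
    rw [norm_mul, norm_div, norm_div, Complex.norm_two]
    calc ‖a - b‖ / 2 * (‖u + v‖ / ‖u - v‖) ≤ L * ‖u - v‖ / 2 * (2 / ‖u - v‖) := by
          gcongr
          linarith [norm_nonneg (a - b)]
      _ = L := by field_simp
  calc ‖(a * u - b * v) / (u - v)‖ ≤ ‖(a + b) / 2‖ + ‖(a - b) / 2 * ((u + v) / (u - v))‖ := by
        rw [hsplit]
        exact norm_add_le _ _
    _ ≤ M + L := add_le_add hmean hdiff

lemma zeta_eq_pow (n : ℕ) (k : Fin n) :
    zeta n k = Complex.exp (2 * π * Complex.I / n) ^ (k : ℕ) := by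
  rw [zeta, theta, ← Complex.exp_nat_mul]
  push_cast
  ring_nf

lemma zeta_injective (n : ℕ) : Function.Injective (zeta n) := by
  intro i j h
  rw [zeta_eq_pow, zeta_eq_pow] at h
  exact Fin.ext ((Complex.isPrimitiveRoot_exp n i.pos.ne').pow_inj i.isLt j.isLt h)

theorem stmt17_general (n : ℕ) (i j : Fin n) (hij : i ≠ j) :
    ‖rho n i j‖ ≤ 4 := by
  have hg (θ : ℝ) : ‖((g θ : ℝ) : ℂ)‖ ≤ 1 := by
    rw [Complex.norm_real, Real.norm_eq_abs]
    exact abs_tri_le_one _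
  have hζ (k : Fin n) : ‖zeta n k‖ ≤ 1 := (Complex.norm_exp_ofReal_mul_I _).le
  have hlip : ‖((g (theta n i) : ℝ) : ℂ) - ((g (theta n j) : ℝ) : ℂ)‖ ≤
      3 * ‖zeta n i - zeta n j‖ := by
    rw [← Complex.ofReal_sub, Complex.norm_real, Real.norm_eq_abs]
    exact_mod_cast abs_tri_nat_mul_sub_le 3 (theta n i) (theta n j)
  have := norm_mul_sub_mul_div_sub_le ((zeta_injective n).ne hij) (hg _) (hg _) (hζ i) (hζ j) hlip
  rw [rho]
  linarith

theorem stmt17 (n : ℕ) (hn : 1 ≤ n) (i j : Fin n) (hij : i ≠ j) :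
    ‖rho n i j‖ ≤ 4 :=
  stmt17_general n i j hij
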